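/- arXiv:2403.05825 — 8 statements merged into one kernel-verified Lean document; each statement's English description precedes it below -/
import Mathlib

section
/- Let P be a polymatroid on [n], and let a, b be distinct bases of P such that there exist indices i, j ∈ [n] with a_i < b_i and a_t = b_t for all t ∈ [n]\{i,j\}. Then for any k ∈ [n]\{i,j\}: (1) if a + e_k − e_j ∈ P then b + e_k − e_i ∈ P; and (2) if a − e_k + e_i ∈ P then b − e_k + e_j ∈ P. -/
open Finset

/-- The `i`-th standard basis vector in `ℤ^n`. -/
def e {n : ℕ} (i : Fin n) : Fin n → ℤ := fun t => if t = i then 1 else 0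

/-- Membership characterization of the polymatroid `P_f`. -/
def IsPolymatroid {n : ℕ} (P : Set (Fin n → ℤ)) (f : Finset (Fin n) → ℤ) : Prop :=
  (f ∅ = 0) ∧ (∀ I J : Finset (Fin n), f (I ∪ J) + f (I ∩ J) ≤ f I + f J) ∧
    (∀ a : Fin n → ℤ, a ∈ P ↔
      (∀ I : Finset (Fin n), ∑ t ∈ I, a t ≤ f I) ∧ ∑ t, a t = f univ)

/-- `i` is internally active w.r.t. the basis `a` of `P` for the order `lt`. -/
def IntActO {n : ℕ} (P : Set (Fin n → ℤ)) (lt : Fin n → Fin n → Prop)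
    (a : Fin n → ℤ) (i : Fin n) : Prop :=
  ∀ j : Fin n, lt j i → a - e i + e j ∉ P

/-- `i` is externally active w.r.t. the basis `a` of `P` for the order `lt`. -/
def ExtActO {n : ℕ} (P : Set (Fin n → ℤ)) (lt : Fin n → Fin n → Prop)
    (a : Fin n → ℤ) (i : Fin n) : Prop :=
  ∀ j : Fin n, lt j i → a + e i - e j ∉ P

/-- Internal activity for the natural order on `Fin n`. -/
def IntAct {n : ℕ} (P : Set (Fin n → ℤ)) (a : Fin n → ℤ) (i : Fin n) : Prop :=
  IntActO P (· < ·) a i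

/-- External activity for the natural order on `Fin n`. -/
def ExtAct {n : ℕ} (P : Set (Fin n → ℤ)) (a : Fin n → ℤ) (i : Fin n) : Prop :=
  ExtActO P (· < ·) a i

noncomputable def oi {n : ℕ} (P : Set (Fin n → ℤ)) (a : Fin n → ℤ) : ℕ :=
  {i : Fin n | IntAct P a i ∧ ¬ ExtAct P a i}.ncard

noncomputable def oe {n : ℕ} (P : Set (Fin n → ℤ)) (a : Fin n → ℤ) : ℕ :=
  {i : Fin n | ExtAct P a i ∧ ¬ IntAct P a i}.ncard

noncomputable def ie {n : ℕ} (P : Set (Fin n → ℤ)) (a : Fin n → ℤ) : ℕ :=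
  {i : Fin n | IntAct P a i ∧ ExtAct P a i}.ncard

/-- The polymatroid Tutte polynomial evaluated at `(x, y)`. -/
noncomputable def TP {n : ℕ} (P : Set (Fin n → ℤ)) {R : Type*} [CommRing R]
    (x y : R) : R :=
  ∑ᶠ a ∈ P, x ^ oi P a * y ^ oe P a * (x + y - 1) ^ ie P a

theorem stmt1 {n : ℕ} (P : Set (Fin n → ℤ)) (f : Finset (Fin n) → ℤ)
    (hP : IsPolymatroid P f) (a b : Fin n → ℤ) (ha : a ∈ P) (hb : b ∈ P)
    (hab : a ≠ b) (i j : Fin n) (hij : a i < b i)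
    (hagree : ∀ t : Fin n, t ≠ i → t ≠ j → a t = b t)
    (k : Fin n) (hki : k ≠ i) (hkj : k ≠ j) :
    (a + e k - e j ∈ P → b + e k - e i ∈ P) ∧
      (a - e k + e i ∈ P → b - e k + e j ∈ P) := by
  obtain ⟨hf0, hsub, hmem⟩ := hP
  obtain ⟨haI, haS⟩ := (hmem a).1 ha
  obtain ⟨hbI, hbS⟩ := (hmem b).1 hb
  have hsum0 : ∑ t, (a t - b t) = 0 := by
    rw [Finset.sum_sub_distrib, haS, hbS, sub_self]
  have hne : i ≠ j := by
    rintro rfl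
    have h0 : ∑ t, (a t - b t) = a i - b i :=
      Finset.sum_eq_single_of_mem i (Finset.mem_univ i)
        (fun t _ ht => by rw [hagree t ht ht, sub_self])
    rw [hsum0] at h0
    omega
  have hdj : a j - b j = b i - a i := by
    have h0 : ∑ t, (a t - b t) = ∑ t ∈ ({i, j} : Finset (Fin n)), (a t - b t) :=
      (Finset.sum_subset (Finset.subset_univ _) (fun t _ ht => by
        simp only [Finset.mem_insert, Finset.mem_singleton, not_or] at ht
        rw [hagree t ht.1 ht.2, sub_self])).symm
    rw [hsum0, Finset.sum_pair hne] at h0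
    linarith
  have hd1 : (1:ℤ) ≤ b i - a i := by linarith
  have key : ∀ t, b t - a t =
      (if t = i then b i - a i else 0) - (if t = j then b i - a i else 0) := by
    intro t
    by_cases hti : t = i
    · subst hti; simp [hne]
    · by_cases htj : t = j
      · subst htj; simp [hti]; linarith
      · simp [hti, htj, hagree t hti htj]
  have sumdiff : ∀ I : Finset (Fin n), ∑ t ∈ I, b t = ∑ t ∈ I, a t +
      ((if i ∈ I then b i - a i else 0) - (if j ∈ I then b i - a i else 0)) := by
    intro I
    have h1 : ∑ t ∈ I, (b t - a t) =
        (if i ∈ I then b i - a i else 0) - (if j ∈ I then b i - a i else 0) := by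
      rw [Finset.sum_congr rfl (fun t _ => key t), Finset.sum_sub_distrib,
        Finset.sum_ite_eq' I i, Finset.sum_ite_eq' I j]
    rw [Finset.sum_sub_distrib] at h1
    linarith
  have hE : ∀ (c : Fin n → ℤ) (p q : Fin n) (I : Finset (Fin n)),
      ∑ t ∈ I, (c + e p - e q) t = ∑ t ∈ I, c t +
        ((if p ∈ I then 1 else 0) - (if q ∈ I then 1 else 0)) := by
    intro c p q I
    simp only [Pi.add_apply, Pi.sub_apply, e]
    rw [Finset.sum_sub_distrib, Finset.sum_add_distrib,
      Finset.sum_ite_eq' I p, Finset.sum_ite_eq' I q]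
    ring
  have hE' : ∀ (c : Fin n → ℤ) (p q : Fin n) (I : Finset (Fin n)),
      ∑ t ∈ I, (c - e p + e q) t = ∑ t ∈ I, c t +
        ((if q ∈ I then 1 else 0) - (if p ∈ I then 1 else 0)) := by
    intro c p q I
    simp only [Pi.add_apply, Pi.sub_apply, e]
    rw [Finset.sum_add_distrib, Finset.sum_sub_distrib,
      Finset.sum_ite_eq' I p, Finset.sum_ite_eq' I q]
    ring
  constructor
  · intro h
    obtain ⟨h1, h2⟩ := (hmem _).1 h
    refine (hmem _).2 ⟨fun I => ?_, ?_⟩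
    · have q1 := h1 I
      rw [hE a k j I] at q1
      have q2 := haI I
      have q3 := hbI I
      rw [sumdiff I] at q3
      rw [hE b k i I, sumdiff I]
      by_cases hiI : i ∈ I <;> by_cases hjI : j ∈ I <;> by_cases hkI : k ∈ I <;>
        simp only [hiI, hjI, hkI, if_true, if_false] at q1 q3 ⊢ <;> linarith
    · rw [hE b k i Finset.univ]
      simp [hbS]
  · intro h
    obtain ⟨h1, h2⟩ := (hmem _).1 h
    refine (hmem _).2 ⟨fun I => ?_, ?_⟩
    · have q1 := h1 I
      rw [hE' a k i I] at q1
      have q2 := haI I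
      have q3 := hbI I
      rw [sumdiff I] at q3
      rw [hE' b k j I, sumdiff I]
      by_cases hiI : i ∈ I <;> by_cases hjI : j ∈ I <;> by_cases hkI : k ∈ I <;>
        simp only [hiI, hjI, hkI, if_true, if_false] at q1 q3 ⊢ <;> linarith
    · rw [hE' b k j Finset.univ]
      simp [hbS]
end

section
/- Let P be a polymatroid on [n] and a ∈ P a basis. An index i ∈ [n] is internally active with respect to a (i.e., a − e_i + e_j ∉ P for all j < i) if and only if there exists a subset I ⊆ [n] with i = min(I) and [n]\I tight for a (Σ_{t∈[n]\I} a_t = f([n]\I)). -/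
open Finset

lemma sum_e {n : ℕ} (S : Finset (Fin n)) (k : Fin n) :
    ∑ t ∈ S, e k t = if k ∈ S then 1 else 0 := by
  simp [e]

theorem stmt3 {n : ℕ} (P : Set (Fin n → ℤ)) (f : Finset (Fin n) → ℤ)
    (hP : IsPolymatroid P f) (a : Fin n → ℤ) (ha : a ∈ P) (i : Fin n) :
    IntAct P a i ↔
      ∃ I : Finset (Fin n), (i ∈ I ∧ ∀ t ∈ I, i ≤ t) ∧
        ∑ t ∈ univ \ I, a t = f (univ \ I)  := by
  obtain ⟨hf0, hsub, hmem⟩ := hP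
  have haP := (hmem a).1 ha
  have tight_union : ∀ S T : Finset (Fin n),
      ∑ t ∈ S, a t = f S → ∑ t ∈ T, a t = f T → ∑ t ∈ S ∪ T, a t = f (S ∪ T) := by
    intro S T hS hT
    have h1 := haP.1 (S ∪ T)
    have h2 := haP.1 (S ∩ T)
    have h3 := hsub S T
    have h4 : ∑ t ∈ S ∪ T, a t + ∑ t ∈ S ∩ T, a t = ∑ t ∈ S, a t + ∑ t ∈ T, a t :=
      Finset.sum_union_inter
    linarith
  constructor
  · intro h
    have key : ∀ j : Fin n, j < i → ∃ S : Finset (Fin n),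
        j ∈ S ∧ i ∉ S ∧ ∑ t ∈ S, a t = f S := by
      intro j hj
      have hb : a - e i + e j ∉ P := h j hj
      have hsumb : ∑ t, (a - e i + e j) t = f univ := by
        simp [Finset.sum_add_distrib, Finset.sum_sub_distrib, sum_e, haP.2]
      have hnot : ¬ ∀ I, ∑ t ∈ I, (a - e i + e j) t ≤ f I := fun hall =>
        hb ((hmem _).2 ⟨hall, hsumb⟩)
      push_neg at hnot
      obtain ⟨S, hS⟩ := hnot
      have hsum : ∑ t ∈ S, (a - e i + e j) t
          = ∑ t ∈ S, a t - (if i ∈ S then 1 else 0) + (if j ∈ S then 1 else 0) := by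
        simp [Finset.sum_add_distrib, Finset.sum_sub_distrib, sum_e]
      rw [hsum] at hS
      have hle := haP.1 S
      have hjS : j ∈ S := by
        by_contra hjS
        simp only [if_neg hjS] at hS
        split_ifs at hS <;> linarith
      have hiS : i ∉ S := by
        intro hiS
        simp only [if_pos hjS, if_pos hiS] at hS
        linarith
      refine ⟨S, hjS, hiS, ?_⟩
      simp only [if_pos hjS, if_neg hiS] at hS
      omega
    have claim : ∀ J : Finset (Fin n), (∀ j ∈ J, j < i) → ∃ T : Finset (Fin n),
        (∀ j ∈ J, j ∈ T) ∧ i ∉ T ∧ ∑ t ∈ T, a t = f T := by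
      intro J
      induction J using Finset.induction with
      | empty => exact fun _ => ⟨∅, by simp, by simp, by simp [hf0]⟩
      | @insert x J hx ih =>
        intro hJ
        obtain ⟨T, hT1, hT2, hT3⟩ := ih (fun j hj => hJ j (mem_insert_of_mem hj))
        obtain ⟨S, hS1, hS2, hS3⟩ := key _ (hJ _ (mem_insert_self _ _))
        refine ⟨S ∪ T, fun j hj => ?_, by simp [hS2, hT2], tight_union _ _ hS3 hT3⟩
        rcases mem_insert.1 hj with h' | h'
        · exact mem_union_left _ (h' ▸ hS1)
        · exact mem_union_right _ (hT1 j h')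
    obtain ⟨T, hT1, hT2, hT3⟩ := claim (univ.filter (· < i)) (by simp)
    refine ⟨Tᶜ, ⟨by simpa using hT2, fun t ht => ?_⟩, ?_⟩
    · by_contra hlt
      push_neg at hlt
      exact (mem_compl.1 ht) (hT1 t (by simp [hlt]))
    · have hTT : univ \ Tᶜ = T := by ext t; simp
      rw [hTT]; exact hT3
  · rintro ⟨I, ⟨hiI, hmin⟩, htight⟩ j hj hb
    have hjC : j ∈ univ \ I := by
      simp only [mem_sdiff, mem_univ, true_and]
      intro hjI; exact absurd (hmin j hjI) (not_le.2 hj)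
    have hiC : i ∉ univ \ I := by simp [hiI]
    have hle := ((hmem _).1 hb).1 (univ \ I)
    have hsum : ∑ t ∈ univ \ I, (a - e i + e j) t
        = ∑ t ∈ univ \ I, a t - (if i ∈ univ \ I then 1 else 0)
          + (if j ∈ univ \ I then 1 else 0) := by
      simp [Finset.sum_add_distrib, Finset.sum_sub_distrib, sum_e]
      split_ifs <;> ring
    rw [hsum, if_neg hiC, if_pos hjC, htight] at hle
    linarith
end

section
/- Let P be a polymatroid on [n], and let a, b be distinct bases of P such that there exist indices i, j with a_i < b_i and a_t = b_t for all t ∈ [n]\{i,j\}. Then for any k > max{i,j}, k is externally active with respect to b if and only if k is externally active with respect to a. -/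
open Finset

/-! A basis change `a + e k - e l` leaves `P` exactly when some `a`-tight set (one with
`∑_{t ∈ I} a t = f I`) contains `k` but not `l`. By submodularity tight sets are closed under
intersection, so `k` is externally active iff a single tight set contains `k` and avoids every
smaller index. Such a set misses `i` and `j`, where alone `a` and `b` differ, so it is tight for
`a` exactly when it is tight for `b`. -/

def IsTight {n : ℕ} (f : Finset (Fin n) → ℤ) (a : Fin n → ℤ) (I : Finset (Fin n)) : Prop :=
  ∑ t ∈ I, a t = f I

lemma sum_add_e_sub_e {n : ℕ} (a : Fin n → ℤ) (k l : Fin n) (I : Finset (Fin n)) :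
    ∑ t ∈ I, (a + e k - e l) t =
      ∑ t ∈ I, a t + (if k ∈ I then 1 else 0) - (if l ∈ I then 1 else 0) := by
  simp [e, sum_add_distrib, sum_sub_distrib]

namespace IsPolymatroid

variable {n : ℕ} {P : Set (Fin n → ℤ)} {f : Finset (Fin n) → ℤ} {a : Fin n → ℤ}

lemma isTight_univ (hP : IsPolymatroid P f) (ha : a ∈ P) : IsTight f a univ :=
  ((hP.2.2 a).1 ha).2

lemma isTight_inter (hP : IsPolymatroid P f) (ha : a ∈ P) {I J : Finset (Fin n)}
    (hI : IsTight f a I) (hJ : IsTight f a J) : IsTight f a (I ∩ J) := by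
  have hle := ((hP.2.2 a).1 ha).1
  have hsub := hP.2.1 I J
  have hunion := hle (I ∪ J)
  have hinter := hle (I ∩ J)
  have hsplit := sum_union_inter (s₁ := I) (s₂ := J) (f := a)
  unfold IsTight at *
  omega

lemma isTight_inf (hP : IsPolymatroid P f) (ha : a ∈ P) {ι : Type*} (s : Finset ι)
    {T : ι → Finset (Fin n)} (hT : ∀ l ∈ s, IsTight f a (T l)) : IsTight f a (s.inf T) :=
  inf_induction (isTight_univ hP ha) (fun _ hI _ hJ => isTight_inter hP ha hI hJ) hT

lemma add_e_sub_e_mem_iff (hP : IsPolymatroid P f) (ha : a ∈ P) (k l : Fin n) :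
    a + e k - e l ∈ P ↔ ∀ I, IsTight f a I → k ∈ I → l ∈ I := by
  obtain ⟨hle, hsum⟩ := (hP.2.2 a).1 ha
  rw [hP.2.2]
  constructor
  · rintro ⟨hle', -⟩ I hI hk
    by_contra hl
    have := hle' I
    rw [sum_add_e_sub_e, if_pos hk, if_neg hl, hI] at this
    omega
  · intro htight
    refine ⟨fun I => ?_, by rw [sum_add_e_sub_e]; simp [hsum]⟩
    rw [sum_add_e_sub_e]
    have := hle I
    by_cases hk : k ∈ I
    · by_cases hl : l ∈ I
      · simp only [hk, hl, if_true]; omega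
      · have hloose : ∑ t ∈ I, a t ≠ f I := fun hI => hl (htight I hI hk)
        simp only [hk, hl, if_true, if_false]; omega
    · simp only [hk, if_false]; split_ifs <;> omega

lemma extActO_iff_exists_isTight (hP : IsPolymatroid P f) (ha : a ∈ P)
    (lt : Fin n → Fin n → Prop) (k : Fin n) :
    ExtActO P lt a k ↔ ∃ S, IsTight f a S ∧ k ∈ S ∧ ∀ l, lt l k → l ∉ S := by
  constructor
  · intro hact
    have hwitness : ∀ l, ∃ I, IsTight f a I ∧ k ∈ I ∧ (lt l k → l ∉ I) := by
      intro l
      by_cases hl : lt l k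
      · have hout := hact l hl
        rw [add_e_sub_e_mem_iff hP ha] at hout
        push Not at hout
        obtain ⟨I, hI, hk, hlI⟩ := hout
        exact ⟨I, hI, hk, fun _ => hlI⟩
      · exact ⟨univ, isTight_univ hP ha, mem_univ k, fun h => absurd h hl⟩
    choose T hT hkT hlT using hwitness
    exact ⟨univ.inf T, isTight_inf hP ha univ fun l _ => hT l, mem_inf.2 fun l _ => hkT l,
      fun l hl hlS => hlT l hl (inf_le (f := T) (mem_univ l) hlS)⟩
  · rintro ⟨S, hS, hk, hsmall⟩ l hl hmem
    exact hsmall l hl ((add_e_sub_e_mem_iff hP ha k l).1 hmem S hS hk)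

lemma extActO_congr (hP : IsPolymatroid P f) {b : Fin n → ℤ} (ha : a ∈ P) (hb : b ∈ P)
    (lt : Fin n → Fin n → Prop) (k : Fin n) (hab : ∀ t, ¬ lt t k → a t = b t) :
    ExtActO P lt a k ↔ ExtActO P lt b k := by
  rw [extActO_iff_exists_isTight hP ha, extActO_iff_exists_isTight hP hb]
  refine exists_congr fun S => and_congr_left fun ⟨_, hsmall⟩ => ?_
  unfold IsTight
  rw [sum_congr rfl fun t ht => hab t fun hlt => hsmall t hlt ht]

end IsPolymatroid

theorem stmt5_general {n : ℕ} (P : Set (Fin n → ℤ)) (f : Finset (Fin n) → ℤ)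
    (hP : IsPolymatroid P f) (a b : Fin n → ℤ) (ha : a ∈ P) (hb : b ∈ P)
    (i j : Fin n)
    (hagree : ∀ t : Fin n, t ≠ i → t ≠ j → a t = b t)
    (k : Fin n) (hki : i < k) (hkj : j < k) :
    ExtAct P b k ↔ ExtAct P a k := by
  refine hP.extActO_congr hb ha _ k fun t hsmall => (hagree t ?_ ?_).symm
  · rintro rfl; exact hsmall hki
  · rintro rfl; exact hsmall hkj

theorem stmt5 {n : ℕ} (P : Set (Fin n → ℤ)) (f : Finset (Fin n) → ℤ)
    (hP : IsPolymatroid P f) (a b : Fin n → ℤ) (ha : a ∈ P) (hb : b ∈ P)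
    (hab : a ≠ b) (i j : Fin n) (hij : a i < b i)
    (hagree : ∀ t : Fin n, t ≠ i → t ≠ j → a t = b t)
    (k : Fin n) (hki : i < k) (hkj : j < k) :
    ExtAct P b k ↔ ExtAct P a k :=
  stmt5_general P f hP a b ha hb i j hagree k hki hkj
end

section
/- Let P be a polymatroid on [n] and fix h ∈ [n−1]. Let a ∈ P with a + e_h − e_{h+1} ∈ P. If h is not internally active with respect to a (under the order 1<2<⋯<n), then there exists k < h with a + e_k − e_{h+1} ∈ P; in particular h+1 is not internally active with respect to a under the order obtained from 1<⋯<n by swapping h and h+1. -/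
open Finset

lemma sumE' {n : ℕ} (I : Finset (Fin n)) (j : Fin n) :
    ∑ t ∈ I, e j t = if j ∈ I then 1 else 0 := by
  simp [e, Finset.sum_ite_eq' I j (fun _ => (1:ℤ))]

theorem stmt8 {n : ℕ} (P : Set (Fin n → ℤ)) (f : Finset (Fin n) → ℤ)
    (hP : IsPolymatroid P f) (h h' : Fin n) (hh' : (h' : ℕ) = (h : ℕ) + 1)
    (a : Fin n → ℤ) (ha : a ∈ P) (ha' : a + e h - e h' ∈ P)
    (hna : ¬ IntAct P a h) :
    (∃ k : Fin n, k < h ∧ a + e k - e h' ∈ P) ∧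
      ¬ IntActO P (fun x y => Equiv.swap h h' x < Equiv.swap h h' y) a h' := by
  obtain ⟨hf0, hsub, hmem⟩ := hP
  simp only [IntAct, IntActO, not_forall, not_not, exists_prop] at hna
  obtain ⟨j, hj, hbP⟩ := hna
  have hhh' : h < h' := by
    rw [Fin.lt_def]; omega
  have hjh' : j ≠ h' := ne_of_lt (lt_trans hj hhh')
  have hjh : j ≠ h := ne_of_lt hj
  have hkmem : a + e j - e h' ∈ P := by
    rw [hmem]
    obtain ⟨haI, haS⟩ := (hmem a).mp ha
    obtain ⟨hbI, _⟩ := (hmem _).mp hbP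
    obtain ⟨hcI, _⟩ := (hmem _).mp ha'
    constructor
    · intro I
      have h1 := haI I
      have h2 := hbI I
      have h3 := hcI I
      simp only [Pi.add_apply, Pi.sub_apply, Finset.sum_add_distrib,
        Finset.sum_sub_distrib, sumE'] at h2 h3 ⊢
      by_cases hjI : j ∈ I <;> by_cases hh'I : h' ∈ I <;>
        by_cases hhI : h ∈ I <;> simp_all <;> linarith
    · have h2 := haS
      simp only [Pi.add_apply, Pi.sub_apply, Finset.sum_add_distrib,
        Finset.sum_sub_distrib, sumE', Finset.mem_univ, if_pos]
      linarith
  refine ⟨⟨j, hj, hkmem⟩, ?_⟩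
  simp only [IntActO]
  push_neg
  refine ⟨j, ?_, ?_⟩
  · rw [Equiv.swap_apply_of_ne_of_ne hjh hjh', Equiv.swap_apply_right]
    exact hj
  · have heq : a - e h' + e j = a + e j - e h' := by ring
    rw [heq]; exact hkmem
end

section
/- Let P be a polymatroid on [n] and fix h ∈ [n−1]. Let a ∈ P with a + e_h − e_{h+1} ∈ P. If there exists k < h with a + e_{h+1} − e_k ∈ P (i.e., h+1 is not externally active with respect to a under the order swapping h and h+1), then a + e_h − e_k ∈ P, so h is not externally active with respect to a under the natural order. -/
open Finset

lemma e_sum {n : ℕ} (i : Fin n) (J : Finset (Fin n)) :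
    ∑ t ∈ J, e i t = if i ∈ J then 1 else 0 := by
  simp [e, Finset.sum_ite_eq' J i (fun _ => (1:ℤ))]

theorem stmt9 {n : ℕ} (P : Set (Fin n → ℤ)) (f : Finset (Fin n) → ℤ)
    (hP : IsPolymatroid P f) (h h' : Fin n) (hh' : (h' : ℕ) = (h : ℕ) + 1)
    (a : Fin n → ℤ) (ha : a ∈ P) (ha' : a + e h - e h' ∈ P) :
    (∀ k : Fin n, k < h → a + e h' - e k ∈ P → a + e h - e k ∈ P) ∧
      ((∃ k : Fin n, k < h ∧ a + e h' - e k ∈ P) → ¬ ExtAct P a h) := by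
  obtain ⟨hf0, hsub, hmem⟩ := hP
  have key : ∀ k : Fin n, k < h → a + e h' - e k ∈ P → a + e h - e k ∈ P := by
    intro k hk hkP
    obtain ⟨haI, haT⟩ := (hmem a).mp ha
    obtain ⟨hcI, hcT⟩ := (hmem _).mp ha'
    obtain ⟨hdI, hdT⟩ := (hmem _).mp hkP
    have hsum : ∀ (i j : Fin n) (J : Finset (Fin n)),
        ∑ t ∈ J, (a + e i - e j) t =
          ∑ t ∈ J, a t + (if i ∈ J then 1 else 0) - (if j ∈ J then 1 else 0) := by
      intro i j J
      simp only [Pi.add_apply, Pi.sub_apply, Finset.sum_add_distrib,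
        Finset.sum_sub_distrib, e_sum]
    rw [hmem]
    constructor
    · intro I
      rw [hsum]
      by_cases hhI : h ∈ I
      · by_cases hkI : k ∈ I
        · have := haI I; simp [hhI, hkI]; linarith
        · by_cases hh'I : h' ∈ I
          · have := hdI I; rw [hsum] at this
            simp [hhI, hkI, hh'I] at this ⊢; linarith
          · have := hcI I; rw [hsum] at this
            simp [hhI, hkI, hh'I] at this ⊢; linarith
      · have := haI I; simp [hhI]
        split_ifs <;> linarith
    · rw [hsum]
      have hhm : h ∈ (Finset.univ : Finset (Fin n)) := Finset.mem_univ h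
      have hkm : k ∈ (Finset.univ : Finset (Fin n)) := Finset.mem_univ k
      simp [hhm, hkm, haT]
  refine ⟨key, ?_⟩
  rintro ⟨k, hk, hkP⟩ hE
  exact hE k hk (key k hk hkP)
end

section
/- Let P be a polymatroid on [n] and let a, a* be bases with a* = a + l·(e_h − e_{h+1}) for some l ≥ 1, such that a + e_{h+1} − e_h ∉ P and a* + e_h − e_{h+1} ∉ P. If there exists a set I ⊆ [n] with [h−1] ⊆ I ⊆ [n]\{h+1\} that is tight for a, then h ∉ I, I is tight for a*, and consequently h is internally active with respect to both a and a* under the natural order. -/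
open Finset

theorem stmt10 {n : ℕ} (P : Set (Fin n → ℤ)) (f : Finset (Fin n) → ℤ)
    (hP : IsPolymatroid P f) (h h' : Fin n) (hh' : (h' : ℕ) = (h : ℕ) + 1)
    (a astar : Fin n → ℤ) (l : ℤ) (hl : 1 ≤ l)
    (hstar : astar = a + l • (e h - e h'))
    (ha : a ∈ P) (hastar : astar ∈ P)
    (h1 : a + e h' - e h ∉ P) (h2 : astar + e h - e h' ∉ P)
    (I : Finset (Fin n)) (hIlow : ∀ t : Fin n, t < h → t ∈ I) (hIh' : h' ∉ I)
    (hIt : ∑ t ∈ I, a t = f I) :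
    h ∉ I ∧ (∑ t ∈ I, astar t = f I) ∧ IntAct P a h ∧ IntAct P astar h := by
  obtain ⟨hf0, hsub, hmem⟩ := hP
  have hsumE : ∀ (i : Fin n) (J : Finset (Fin n)),
      ∑ t ∈ J, e i t = if i ∈ J then (1:ℤ) else 0 := by
    intro i J; simp [e]
  have key : ∀ J : Finset (Fin n), ∑ t ∈ J, astar t
      = ∑ t ∈ J, a t + l * ((if h ∈ J then (1:ℤ) else 0) - (if h' ∈ J then 1 else 0)) := by
    intro J
    rw [hstar]
    simp only [Pi.add_apply, Pi.smul_apply, Pi.sub_apply, smul_eq_mul]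
    rw [Finset.sum_add_distrib, ← Finset.mul_sum, Finset.sum_sub_distrib, hsumE, hsumE]
  have hhI : h ∉ I := by
    intro hIn
    have hle := ((hmem astar).1 hastar).1 I
    rw [key I, hIt, if_pos hIn, if_neg hIh'] at hle
    linarith
  have htight : ∑ t ∈ I, astar t = f I := by
    rw [key I, hIt, if_neg hhI, if_neg hIh']; ring
  refine ⟨hhI, htight, ?_, ?_⟩
  · intro j hj hmem'
    have hjI : j ∈ I := hIlow j hj
    have hle := ((hmem _).1 hmem').1 I
    have hc : ∑ t ∈ I, (a - e h + e j) t
        = ∑ t ∈ I, a t - (if h ∈ I then (1:ℤ) else 0) + (if j ∈ I then 1 else 0) := by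
      simp only [Pi.add_apply, Pi.sub_apply]
      rw [Finset.sum_add_distrib, Finset.sum_sub_distrib, hsumE, hsumE]
    rw [hc, hIt, if_neg hhI, if_pos hjI] at hle
    linarith
  · intro j hj hmem'
    have hjI : j ∈ I := hIlow j hj
    have hle := ((hmem _).1 hmem').1 I
    have hc : ∑ t ∈ I, (astar - e h + e j) t
        = ∑ t ∈ I, astar t - (if h ∈ I then (1:ℤ) else 0) + (if j ∈ I then 1 else 0) := by
      simp only [Pi.add_apply, Pi.sub_apply]
      rw [Finset.sum_add_distrib, Finset.sum_sub_distrib, hsumE, hsumE]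
    rw [hc, htight, if_neg hhI, if_pos hjI] at hle
    linarith
end

section
/- Let P be a polymatroid on [n] and let a, a* be bases agreeing outside {h, h+1} with a_h < a*_h. If h is externally active with respect to a (under the natural order), then there exists a set I with h = min(I) that is tight for both a and a*; consequently h+1 ∈ I, h is externally active with respect to a*, and h+1 is externally active with respect to both a and a* under the order with h and h+1 swapped. -/
open Finset

/-!
If `h` is externally active for `a`, intersecting the tight sets witnessing the failed exchanges
`a + e h - e j` (`j < h`) gives one tight set `I` with `h = min I`. Since `a*` exceeds `a` at `h`
and agrees with it outside `{h, h+1}`, tightness of `I` for `a` and `a* ≤ f` on `I` force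
`h + 1 ∈ I`; then `a*` and `a` have the same sum over `I`, so `I` is tight for `a*` as well.
In the swapped order the predecessors of `h + 1` are exactly the `j < h`, none of which lies in `I`,
so `I` also witnesses the external activity of `h + 1`.
-/

namespace Polymatroid

variable {n : ℕ}

def IsTight (f : Finset (Fin n) → ℤ) (a : Fin n → ℤ) (I : Finset (Fin n)) : Prop :=
  ∑ t ∈ I, a t = f I

theorem sum_e (I : Finset (Fin n)) (x : Fin n) :
    ∑ t ∈ I, e x t = if x ∈ I then 1 else 0 := by
  simp [e, Finset.sum_ite_eq' I x]

theorem sum_add_e_sub_e (c : Fin n → ℤ) (I : Finset (Fin n)) (x j : Fin n) :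
    ∑ t ∈ I, (c + e x - e j) t =
      ∑ t ∈ I, c t + (if x ∈ I then 1 else 0) - (if j ∈ I then 1 else 0) := by
  simp only [Pi.sub_apply, Pi.add_apply, Finset.sum_sub_distrib, Finset.sum_add_distrib, sum_e]

theorem add_e_sub_e_not_mem {P : Set (Fin n → ℤ)} {f : Finset (Fin n) → ℤ}
    (hP : IsPolymatroid P f) {c : Fin n → ℤ} {I : Finset (Fin n)} {x j : Fin n}
    (hI : IsTight f c I) (hx : x ∈ I) (hj : j ∉ I) : c + e x - e j ∉ P := by
  intro hmem
  have hle := ((hP.2.2 _).mp hmem).1 I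
  rw [sum_add_e_sub_e, if_pos hx, if_neg hj] at hle
  unfold IsTight at hI
  omega

theorem exists_isTight_of_add_e_sub_e_not_mem {P : Set (Fin n → ℤ)} {f : Finset (Fin n) → ℤ}
    (hP : IsPolymatroid P f) {c : Fin n → ℤ} (hc : c ∈ P) {x j : Fin n}
    (hnot : c + e x - e j ∉ P) : ∃ I, IsTight f c I ∧ x ∈ I ∧ j ∉ I := by
  obtain ⟨hc_le, hc_univ⟩ := (hP.2.2 c).mp hc
  have htotal : ∑ t, (c + e x - e j) t = f univ := by
    rw [sum_add_e_sub_e, if_pos (mem_univ x), if_pos (mem_univ j), hc_univ]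
    ring
  obtain ⟨I, hI⟩ : ∃ I, f I < ∑ t ∈ I, (c + e x - e j) t := by
    by_contra! hle
    exact hnot ((hP.2.2 _).mpr ⟨hle, htotal⟩)
  rw [sum_add_e_sub_e] at hI
  -- `c(I) ≤ f(I)` leaves room for a violation only when `x ∈ I`, `j ∉ I` and `c(I) = f(I)`.
  have := hc_le I
  by_cases hx : x ∈ I <;> by_cases hj : j ∈ I <;> simp only [hx, hj, if_true, if_false] at hI
  all_goals first | omega | exact ⟨I, by unfold IsTight; omega, hx, hj⟩

theorem IsTight.inter {P : Set (Fin n → ℤ)} {f : Finset (Fin n) → ℤ}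
    (hP : IsPolymatroid P f) {c : Fin n → ℤ} (hc : c ∈ P) {I J : Finset (Fin n)}
    (hI : IsTight f c I) (hJ : IsTight f c J) : IsTight f c (I ∩ J) := by
  have hle := ((hP.2.2 c).mp hc).1
  have hsub := hP.2.1 I J
  have hsplit := Finset.sum_union_inter (s₁ := I) (s₂ := J) (f := c)
  have := hle (I ∪ J)
  have := hle (I ∩ J)
  -- `c(I ∪ J) + c(I ∩ J) = f I + f J ≥ f(I ∪ J) + f(I ∩ J)` squeezes both inequalities to equalities.
  unfold IsTight at *
  omega

theorem IsTight.inf {P : Set (Fin n → ℤ)} {f : Finset (Fin n) → ℤ}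
    (hP : IsPolymatroid P f) {c : Fin n → ℤ} (hc : c ∈ P) {ι : Type*} (s : Finset ι)
    {g : ι → Finset (Fin n)} (hg : ∀ i ∈ s, IsTight f c (g i)) : IsTight f c (s.inf g) := by
  classical
  induction s using Finset.induction_on with
  | empty => exact ((hP.2.2 c).mp hc).2
  | insert i s _ ih =>
    rw [inf_insert, inf_eq_inter]
    exact (hg i (mem_insert_self i s)).inter hP hc
      (ih fun k hk => hg k (mem_insert_of_mem hk))

theorem extActO_iff_exists_isTight {P : Set (Fin n → ℤ)} {f : Finset (Fin n) → ℤ}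
    (hP : IsPolymatroid P f) {a : Fin n → ℤ} (ha : a ∈ P) (lt : Fin n → Fin n → Prop)
    (i : Fin n) :
    ExtActO P lt a i ↔ ∃ I, IsTight f a I ∧ i ∈ I ∧ ∀ j, lt j i → j ∉ I := by
  classical
  constructor
  · intro hext
    have hwit : ∀ j, ∃ I, IsTight f a I ∧ i ∈ I ∧ (lt j i → j ∉ I) := fun j => by
      by_cases hj : lt j i
      · obtain ⟨I, hI, hiI, hjI⟩ := exists_isTight_of_add_e_sub_e_not_mem hP ha (hext j hj)
        exact ⟨I, hI, hiI, fun _ => hjI⟩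
      · exact ⟨univ, ((hP.2.2 a).mp ha).2, mem_univ i, fun h => absurd h hj⟩
    choose g hg_tight hg_mem hg_not using hwit
    refine ⟨univ.inf g, IsTight.inf hP ha univ fun j _ => hg_tight j,
      mem_inf.mpr fun j _ => hg_mem j, fun j hj hjI => hg_not j hj ?_⟩
    exact mem_inf.mp hjI j (mem_univ j)
  · rintro ⟨I, hI, hiI, hnot⟩ j hj
    exact add_e_sub_e_not_mem hP hI hiI (hnot j hj)

theorem extAct_iff_exists_isTight_min {P : Set (Fin n → ℤ)} {f : Finset (Fin n) → ℤ}
    (hP : IsPolymatroid P f) {a : Fin n → ℤ} (ha : a ∈ P) (i : Fin n) :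
    ExtAct P a i ↔ ∃ I, IsTight f a I ∧ i ∈ I ∧ ∀ t ∈ I, i ≤ t := by
  refine (extActO_iff_exists_isTight hP ha _ i).trans ?_
  refine exists_congr fun I => and_congr_right' (and_congr_right' ?_)
  exact ⟨fun H t ht => not_lt.mp fun hti => H t hti ht, fun H j hj hjI => (H j hjI).not_gt hj⟩

theorem isTight_of_agree_off_pair {P : Set (Fin n → ℤ)} {f : Finset (Fin n) → ℤ}
    (hP : IsPolymatroid P f) {a b : Fin n → ℤ} (ha : a ∈ P) (hb : b ∈ P) {h h' : Fin n}
    (hne : h ≠ h') (hagree : ∀ t, t ≠ h → t ≠ h' → a t = b t) (hlt : a h < b h)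
    {I : Finset (Fin n)} (hI : IsTight f a I) (hhI : h ∈ I) : h' ∈ I ∧ IsTight f b I := by
  obtain ⟨-, ha_univ⟩ := (hP.2.2 a).mp ha
  obtain ⟨hb_le, hb_univ⟩ := (hP.2.2 b).mp hb
  have hsupp : ∀ s : Finset (Fin n), {h, h'} ⊆ s →
      ∑ t ∈ s, (b t - a t) = (b h - a h) + (b h' - a h') := fun s hs => by
    rw [← sum_pair hne (f := fun t => b t - a t)]
    refine (sum_subset hs fun t _ ht => ?_).symm
    simp only [mem_insert, mem_singleton, not_or] at ht
    rw [hagree t ht.1 ht.2, sub_self]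
  have hzero : (b h - a h) + (b h' - a h') = 0 := by
    rw [← hsupp univ (subset_univ _), sum_sub_distrib, ha_univ, hb_univ, sub_self]
  have hh'I : h' ∈ I := by
    by_contra hh'
    have hdiff : ∑ t ∈ I, (b t - a t) = b h - a h := by
      refine sum_eq_single_of_mem h hhI fun t ht hth => ?_
      rw [hagree t hth (ne_of_mem_of_not_mem ht hh'), sub_self]
    rw [sum_sub_distrib] at hdiff
    have := hb_le I
    unfold IsTight at hI
    omega
  refine ⟨hh'I, ?_⟩
  have hdiff := hsupp I (insert_subset hhI (singleton_subset_iff.mpr hh'I))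
  rw [sum_sub_distrib, hzero] at hdiff
  unfold IsTight at *
  omega

theorem swap_lt_swap_right_iff {h h' : Fin n} (hlt : h < h') (j : Fin n) :
    Equiv.swap h h' j < Equiv.swap h h' h' ↔ j < h := by
  rw [Equiv.swap_apply_right]
  rcases eq_or_ne j h with rfl | hjh
  · simp [Equiv.swap_apply_left, hlt.le]
  rcases eq_or_ne j h' with rfl | hjh'
  · simp [hlt.not_gt]
  · rw [Equiv.swap_apply_of_ne_of_ne hjh hjh']

end Polymatroid

open Polymatroid in
theorem stmt11 {n : ℕ} (P : Set (Fin n → ℤ)) (f : Finset (Fin n) → ℤ)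
    (hP : IsPolymatroid P f) (h h' : Fin n) (hh' : (h' : ℕ) = (h : ℕ) + 1)
    (a astar : Fin n → ℤ) (ha : a ∈ P) (hastar : astar ∈ P)
    (hagree : ∀ t : Fin n, t ≠ h → t ≠ h' → a t = astar t)
    (hlt : a h < astar h) (hext : ExtAct P a h) :
    (∃ I : Finset (Fin n), (h ∈ I ∧ ∀ t ∈ I, h ≤ t) ∧
        (∑ t ∈ I, a t = f I) ∧ (∑ t ∈ I, astar t = f I) ∧ h' ∈ I) ∧
      ExtAct P astar h ∧
      ExtActO P (fun x y => Equiv.swap h h' x < Equiv.swap h h' y) a h' ∧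
      ExtActO P (fun x y => Equiv.swap h h' x < Equiv.swap h h' y) astar h' := by
  have hhh' : h < h' := Fin.lt_def.mpr (by omega)
  obtain ⟨I, hIa, hhI, hmin⟩ := (extAct_iff_exists_isTight_min hP ha h).mp hext
  obtain ⟨hh'I, hIastar⟩ :=
    isTight_of_agree_off_pair hP ha hastar hhh'.ne hagree hlt hIa hhI
  have hswap : ∀ j, Equiv.swap h h' j < Equiv.swap h h' h' → j ∉ I := fun j hj hjI =>
    ((swap_lt_swap_right_iff hhh' j).mp hj).not_ge (hmin j hjI)
  exact ⟨⟨I, ⟨hhI, hmin⟩, hIa, hIastar, hh'I⟩,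
    (extAct_iff_exists_isTight_min hP hastar h).mpr ⟨I, hIastar, hhI, hmin⟩,
    (extActO_iff_exists_isTight hP ha _ h').mpr ⟨I, hIa, hh'I, hswap⟩,
    (extActO_iff_exists_isTight hP hastar _ h').mpr ⟨I, hIastar, hh'I, hswap⟩⟩
end

section
/- Let P be a polymatroid on [n], let w ∈ S_n be the transposition swapping h and h+1, and let a ∈ P be a basis such that both a + e_h − e_{h+1} ∉ P and a + e_{h+1} − e_h ∉ P. Then for every i ∈ [n]: i is internally active with respect to a in P iff w(i) is internally active with respect to w(a) in w(P), and i is externally active with respect to a in P iff w(i) is externally active with respect to w(a) in w(P). In particular the triple (oi(a), oe(a), ie(a)) computed in P equals that of w(a) computed in w(P). -/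
open Finset

section Aux12
variable {n : ℕ}

variable {n : ℕ}

lemma swap_lt (h h' : Fin n) (hh' : (h' : ℕ) = (h : ℕ) + 1) {j i : Fin n}
    (hji : j < i) :
    Equiv.swap h h' j < Equiv.swap h h' i ∨ (j = h ∧ i = h') := by
  rw [Equiv.swap_apply_def, Equiv.swap_apply_def]
  split_ifs <;>
    first
      | (right; constructor <;> assumption)
      | (left; simp only [Fin.lt_def, Fin.ext_iff] at *; omega)

lemma mem_swap_iff (P Q : Set (Fin n → ℤ)) (h h' : Fin n)
    (hQ : Q = (fun b => b ∘ Equiv.swap h h') '' P) (c : Fin n → ℤ) :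
    c ∈ Q ↔ c ∘ Equiv.swap h h' ∈ P := by
  subst hQ
  constructor
  · rintro ⟨b, hb, rfl⟩
    have hbb : (b ∘ ⇑(Equiv.swap h h')) ∘ ⇑(Equiv.swap h h') = b := by
      funext t; simp [Function.comp, Equiv.swap_apply_self]
    rwa [hbb]
  · intro hc
    exact ⟨c ∘ Equiv.swap h h', hc, by funext t; simp [Function.comp, Equiv.swap_apply_self]⟩

lemma sub_add_comp (a : Fin n → ℤ) (i j h h' : Fin n) :
    (a - e i + e j) ∘ (Equiv.swap h h') =
      (a ∘ Equiv.swap h h') - e (Equiv.swap h h' i) + e (Equiv.swap h h' j) := by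
  funext t
  simp [Function.comp, e, Pi.add_apply, Pi.sub_apply,
    Equiv.apply_eq_iff_eq_symm_apply]

lemma add_sub_comp (a : Fin n → ℤ) (i j h h' : Fin n) :
    (a + e i - e j) ∘ (Equiv.swap h h') =
      (a ∘ Equiv.swap h h') + e (Equiv.swap h h' i) - e (Equiv.swap h h' j) := by
  funext t
  simp [Function.comp, e, Pi.add_apply, Pi.sub_apply,
    Equiv.apply_eq_iff_eq_symm_apply]


end Aux12

theorem stmt12 {n : ℕ} (P : Set (Fin n → ℤ)) (f : Finset (Fin n) → ℤ)
    (hP : IsPolymatroid P f) (h h' : Fin n) (hh' : (h' : ℕ) = (h : ℕ) + 1)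
    (Q : Set (Fin n → ℤ)) (hQ : Q = (fun b => b ∘ Equiv.swap h h') '' P)
    (a : Fin n → ℤ) (ha : a ∈ P)
    (h1 : a + e h - e h' ∉ P) (h2 : a + e h' - e h ∉ P) :
    (∀ i : Fin n,
        (IntAct P a i ↔ IntAct Q (a ∘ Equiv.swap h h') (Equiv.swap h h' i)) ∧
        (ExtAct P a i ↔ ExtAct Q (a ∘ Equiv.swap h h') (Equiv.swap h h' i))) ∧
      oi P a = oi Q (a ∘ Equiv.swap h h') ∧
      oe P a = oe Q (a ∘ Equiv.swap h h') ∧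
      ie P a = ie Q (a ∘ Equiv.swap h h') := by
  set σ := Equiv.swap h h' with hσ
  have hσσ : ∀ x : Fin n, σ (σ x) = x := fun x => Equiv.swap_apply_self h h' x
  have memQ : ∀ c, c ∈ Q ↔ c ∘ σ ∈ P := mem_swap_iff P Q h h' hQ
  have keyI : ∀ (i j : Fin n),
      a - e i + e j ∈ P ↔ (a ∘ σ) - e (σ i) + e (σ j) ∈ Q := by
    intro i j
    rw [memQ, sub_add_comp, hσσ, hσσ]
    have : (a ∘ ⇑σ) ∘ ⇑σ = a := by funext t; simp [Function.comp, hσσ]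
    rw [this]
  have keyE : ∀ (i j : Fin n),
      a + e i - e j ∈ P ↔ (a ∘ σ) + e (σ i) - e (σ j) ∈ Q := by
    intro i j
    rw [memQ, add_sub_comp, hσσ, hσσ]
    have : (a ∘ ⇑σ) ∘ ⇑σ = a := by funext t; simp [Function.comp, hσσ]
    rw [this]
  -- the swap order lemma, reverse direction
  have swap_lt' : ∀ {j i : Fin n}, σ j < σ i → j < i ∨ (j = h' ∧ i = h) := by
    intro j i hji
    rcases swap_lt h h' hh' hji with hc | ⟨hj, hi⟩
    · left; rwa [hσσ, hσσ] at hc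
    · right
      constructor
      · rw [← hσσ j, hj]; exact Equiv.swap_apply_left h h'
      · rw [← hσσ i, hi]; exact Equiv.swap_apply_right h h'
  have hne : h ≠ h' := by
    intro he; rw [he] at hh'; omega
  have intIff : ∀ i, IntAct P a i ↔ IntAct Q (a ∘ σ) (σ i) := by
    intro i
    constructor
    · intro hI j' hj' hmem
      rw [← hσσ j'] at hj' hmem
      rw [← keyI] at hmem
      rcases swap_lt' hj' with hc | ⟨hj, hi⟩
      · exact hI _ hc hmem
      · rw [hj, hi] at hmem
        apply h2
        have : a - e h + e h' = a + e h' - e h := by abel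
        rwa [this] at hmem
    · intro hI j hj hmem
      rcases swap_lt h h' hh' hj with hc | ⟨hj', hi⟩
      · exact hI _ hc ((keyI i j).mp hmem)
      · rw [hj', hi] at hmem
        apply h1
        have : a - e h' + e h = a + e h - e h' := by abel
        rwa [this] at hmem
  have extIff : ∀ i, ExtAct P a i ↔ ExtAct Q (a ∘ σ) (σ i) := by
    intro i
    constructor
    · intro hE j' hj' hmem
      rw [← hσσ j'] at hj' hmem
      rw [← keyE] at hmem
      rcases swap_lt' hj' with hc | ⟨hj, hi⟩
      · exact hE _ hc hmem
      · rw [hj, hi] at hmem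
        exact h1 hmem
    · intro hE j hj hmem
      rcases swap_lt h h' hh' hj with hc | ⟨hj', hi⟩
      · exact hE _ hc ((keyE i j).mp hmem)
      · rw [hj', hi] at hmem
        exact h2 hmem
  refine ⟨fun i => ⟨intIff i, extIff i⟩, ?_, ?_, ?_⟩
  · have hset : {i : Fin n | IntAct Q (a ∘ σ) i ∧ ¬ ExtAct Q (a ∘ σ) i}
        = σ '' {i : Fin n | IntAct P a i ∧ ¬ ExtAct P a i} := by
      ext x
      simp only [Set.mem_image, Set.mem_setOf_eq]
      constructor
      · intro hx
        refine ⟨σ x, ⟨?_, ?_⟩, hσσ x⟩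
        · rw [intIff, hσσ]; exact hx.1
        · rw [extIff, hσσ]; exact hx.2
      · rintro ⟨y, hy, rfl⟩
        exact ⟨(intIff y).mp hy.1, fun c => hy.2 ((extIff y).mpr c)⟩
    rw [oi, oi, hset, Set.ncard_image_of_injective _ σ.injective]
  · have hset : {i : Fin n | ExtAct Q (a ∘ σ) i ∧ ¬ IntAct Q (a ∘ σ) i}
        = σ '' {i : Fin n | ExtAct P a i ∧ ¬ IntAct P a i} := by
      ext x
      simp only [Set.mem_image, Set.mem_setOf_eq]
      constructor
      · intro hx
        refine ⟨σ x, ⟨?_, ?_⟩, hσσ x⟩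
        · rw [extIff, hσσ]; exact hx.1
        · rw [intIff, hσσ]; exact hx.2
      · rintro ⟨y, hy, rfl⟩
        exact ⟨(extIff y).mp hy.1, fun c => hy.2 ((intIff y).mpr c)⟩
    rw [oe, oe, hset, Set.ncard_image_of_injective _ σ.injective]
  · have hset : {i : Fin n | IntAct Q (a ∘ σ) i ∧ ExtAct Q (a ∘ σ) i}
        = σ '' {i : Fin n | IntAct P a i ∧ ExtAct P a i} := by
      ext x
      simp only [Set.mem_image, Set.mem_setOf_eq]
      constructor
      · intro hx
        refine ⟨σ x, ⟨?_, ?_⟩, hσσ x⟩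
        · rw [intIff, hσσ]; exact hx.1
        · rw [extIff, hσσ]; exact hx.2
      · rintro ⟨y, hy, rfl⟩
        exact ⟨(intIff y).mp hy.1, (extIff y).mp hy.2⟩
    rw [ie, ie, hset, Set.ncard_image_of_injective _ σ.injective]
end
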